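/- arXiv:1009.2440 — 2 statements merged into one kernel-verified Lean document; each statement's English description precedes it below -/
import Mathlib

section
/- Let ν = (ν_l, ν_r) be a pair of square matrices (m×m and n×n) over K[[x_1,...,x_p]] with zero constant terms, and A ∈ Mat(m,n,p). Then exp(ν_l) A exp(−ν_r) agrees with A up to degree j (i.e., π_j(exp(ν_l) A exp(−ν_r)) = π_j A) if and only if π_j(ν_l A − A ν_r) = 0. -/
/-- Truncation of a formal power series to total degree `≤ j`. -/
noncomputable def truncLE (K : Type*) [CommRing K] (p j : ℕ)
    (f : MvPowerSeries (Fin p) K) : MvPowerSeries (Fin p) K :=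
  fun d => if (d.sum fun _ n => n) ≤ j then MvPowerSeries.coeff d f else 0

/-- The `j`-jet of a matrix of formal power series. -/
noncomputable def jet {K : Type*} [CommRing K] {m n p : ℕ} (j : ℕ)
    (A : Matrix (Fin m) (Fin n) (MvPowerSeries (Fin p) K)) :
    Matrix (Fin m) (Fin n) (MvPowerSeries (Fin p) K) :=
  A.map (truncLE K p j)

/-- Convergence of a sequence of matrices in the `(x)`-adic (jet) topology. -/
def ConvergesTo {K : Type*} [CommRing K] {m n p : ℕ}
    (s : ℕ → Matrix (Fin m) (Fin n) (MvPowerSeries (Fin p) K))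
    (L : Matrix (Fin m) (Fin n) (MvPowerSeries (Fin p) K)) : Prop :=
  ∀ j : ℕ, ∃ k₀ : ℕ, ∀ k ≥ k₀, jet j (s k) = jet j L

/-- Partial sums of the matrix exponential series `Σ λ^i / i!`. -/
noncomputable def expPartial {K : Type*} [Field K] {m p : ℕ}
    (ν : Matrix (Fin m) (Fin m) (MvPowerSeries (Fin p) K)) (k : ℕ) :
    Matrix (Fin m) (Fin m) (MvPowerSeries (Fin p) K) :=
  ∑ i ∈ Finset.range (k + 1), ((i.factorial : K)⁻¹) • ν ^ i

/-- `E` is the exponential of `ν`, i.e. the limit of the partial sums of `Σ ν^i/i!`. -/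
def IsExpOf {K : Type*} [Field K] {m p : ℕ}
    (ν E : Matrix (Fin m) (Fin m) (MvPowerSeries (Fin p) K)) : Prop :=
  ConvergesTo (expPartial ν) E

/-!
Let `L` and `R` be left multiplication by `ν_l` and right multiplication by `-ν_r`. They commute,
and they, like `D = L + R` (so `D A = ν_l A - A ν_r`), raise the `(x)`-adic order by one.
Modulo terms of order `> k`, the truncated exponentials therefore give
`exp(ν_l) A exp(-ν_r) ≡ ∑_{s ≤ k} D^s A / s!`, whose difference with `A` is
`∑_{s < k} D^s (D A) / (s+1)! = D A + (terms of higher order than D A)`.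
By induction on the order, this has order `> j` exactly when `D A` has.
-/

open Finset MvPowerSeries
open scoped Nat

section Filtration

variable {K M : Type*} [Ring K] [AddCommGroup M] [Module K M] {F : ℕ → Submodule K M}
  {T : Module.End K M}

theorem pow_apply_mem_add (hT : ∀ t, ∀ x ∈ F t, T x ∈ F (t + 1)) (i : ℕ) {t : ℕ} {x : M}
    (hx : x ∈ F t) : (T ^ i) x ∈ F (t + i) := by
  induction i with
  | zero => simpa using hx
  | succ i ih =>
    rw [pow_succ', Module.End.mul_apply, ← add_assoc]
    exact hT _ _ ih

/-- If `y ∈ F d` with `d < t`, then `y` differs from the sum by terms in `F (d + 1)`,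
so `y ∈ F (d + 1)`; iterate up to `t`. -/
theorem sum_smul_pow_apply_mem_iff (hF : Antitone F) (hF0 : ∀ x, x ∈ F 0)
    (hT : ∀ t, ∀ x ∈ F t, T x ∈ F (t + 1)) {c : ℕ → K} (hc : c 0 = 1) (N t : ℕ) (y : M) :
    ∑ s ∈ range (N + 1), c s • (T ^ s) y ∈ F t ↔ y ∈ F t := by
  constructor
  · intro hS
    suffices ∀ d ≤ t, y ∈ F d from this t le_rfl
    intro d hd
    induction d with
    | zero => exact hF0 y
    | succ d ih =>
      have hy := ih (by omega)
      have htail : ∑ s ∈ range N, c (s + 1) • (T ^ (s + 1)) y ∈ F (d + 1) := by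
        refine sum_mem fun s _ => Submodule.smul_mem _ _ ?_
        rw [pow_succ, Module.End.mul_apply]
        exact hF (by omega) (pow_apply_mem_add hT s (hT d y hy))
      rw [sum_range_succ', hc, pow_zero, one_smul, Module.End.one_apply] at hS
      simpa using sub_mem (hF hd hS) htail
  · intro hy
    exact sum_mem fun s _ => Submodule.smul_mem _ _ (hF (by omega) (pow_apply_mem_add hT s hy))

end Filtration

theorem sum_inv_factorial_smul_pow_apply_sub {K M : Type*} [Field K] [AddCommGroup M]
    [Module K M] (T : Module.End K M) (x : M) (N : ℕ) :
    ∑ s ∈ range (N + 1), (s ! : K)⁻¹ • (T ^ s) x - x =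
      ∑ s ∈ range N, ((s + 1)! : K)⁻¹ • (T ^ s) (T x) := by
  simp only [sum_range_succ', Nat.factorial_zero, Nat.cast_one, inv_one, pow_zero,
    Module.End.one_apply, one_smul, add_sub_cancel_right, pow_succ, Module.End.mul_apply]

theorem Commute.inv_factorial_smul_add_pow {K A : Type*} [Field K] [CharZero K] [Ring A]
    [Algebra K A] {x y : A} (h : Commute x y) (s : ℕ) :
    (s ! : K)⁻¹ • (x + y) ^ s =
      ∑ q ∈ antidiagonal s, ((q.1 ! : K)⁻¹ * (q.2 ! : K)⁻¹) • (x ^ q.1 * y ^ q.2) := by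
  rw [h.add_pow', smul_sum]
  refine sum_congr rfl fun q hq => ?_
  rw [HasAntidiagonal.mem_antidiagonal] at hq
  subst hq
  rw [← Nat.cast_smul_eq_nsmul K, smul_smul, Nat.cast_add_choose]
  congr 1
  field_simp [Nat.factorial_ne_zero]

theorem sum_range_prod_range_eq {M : Type*} [AddCommMonoid M] (k : ℕ) (f : ℕ × ℕ → M) :
    ∑ q ∈ range (k + 1) ×ˢ range (k + 1), f q =
      ∑ s ∈ range (k + 1), ∑ q ∈ antidiagonal s, f q +
        ∑ q ∈ range (k + 1) ×ˢ range (k + 1) with k < q.1 + q.2, f q := by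
  rw [← sum_filter_add_sum_filter_not _ (fun q => q.1 + q.2 ≤ k)]
  congr 1
  · rw [← sum_fiberwise_of_maps_to (g := fun q => q.1 + q.2) (t := range (k + 1))
      (fun q hq => by simp only [mem_filter] at hq; simpa [Nat.lt_succ_iff] using hq.2)]
    refine sum_congr rfl fun s hs => sum_congr ?_ fun _ _ => rfl
    ext ⟨a, b⟩
    simp only [mem_range] at hs
    simp only [mem_filter, mem_product, mem_range, HasAntidiagonal.mem_antidiagonal]
    omega
  · simp only [not_le]

namespace MvPowerSeries

variable {σ R : Type*} [CommRing R]

theorem le_order_sum {ι : Type*} (s : Finset ι) (f : ι → MvPowerSeries σ R) {n : ℕ∞}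
    (h : ∀ i ∈ s, n ≤ (f i).order) : n ≤ (∑ i ∈ s, f i).order :=
  sum_induction f (fun g => n ≤ g.order) (fun _ _ ha hb => (le_min ha hb).trans min_order_le_add)
    (by simp) h

end MvPowerSeries

namespace Matrix

variable {σ R ι κ μ ν : Type*} [CommRing R]

def orderAtLeast (s : ℕ) : Submodule R (Matrix ι κ (MvPowerSeries σ R)) where
  carrier := {X | ∀ a b, (s : ℕ∞) ≤ (X a b).order}
  add_mem' hX hY a b := (le_min (hX a b) (hY a b)).trans min_order_le_add
  zero_mem' a b := by simp
  smul_mem' _ _ hX a b := (hX a b).trans le_order_smul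

theorem mem_orderAtLeast {s : ℕ} {X : Matrix ι κ (MvPowerSeries σ R)} :
    X ∈ orderAtLeast s ↔ ∀ a b, (s : ℕ∞) ≤ (X a b).order :=
  Iff.rfl

theorem mem_orderAtLeast_zero (X : Matrix ι κ (MvPowerSeries σ R)) : X ∈ orderAtLeast 0 :=
  fun _ _ => by simp

theorem orderAtLeast_antitone :
    Antitone (orderAtLeast : ℕ → Submodule R (Matrix ι κ (MvPowerSeries σ R))) :=
  fun _ _ hst _ hX a b => le_trans (by exact_mod_cast hst) (hX a b)

theorem mem_orderAtLeast_one_iff {X : Matrix ι κ (MvPowerSeries σ R)} :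
    X ∈ orderAtLeast 1 ↔ ∀ a b, constantCoeff (X a b) = 0 := by
  simp only [mem_orderAtLeast, Nat.cast_one, one_le_order_iff_constCoeff_eq_zero]

theorem mul_mem_orderAtLeast [Fintype κ] {s t : ℕ} {X : Matrix ι κ (MvPowerSeries σ R)}
    {Y : Matrix κ μ (MvPowerSeries σ R)} (hX : X ∈ orderAtLeast s) (hY : Y ∈ orderAtLeast t) :
    X * Y ∈ orderAtLeast (s + t) := fun a b =>
  le_order_sum _ _ fun c _ => le_trans (by push_cast; exact add_le_add (hX a c) (hY c b))
    le_order_mul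

theorem pow_mem_orderAtLeast [Fintype ι] [DecidableEq ι] {X : Matrix ι ι (MvPowerSeries σ R)}
    (hX : X ∈ orderAtLeast 1) (i : ℕ) : X ^ i ∈ orderAtLeast i := by
  induction i with
  | zero => exact mem_orderAtLeast_zero _
  | succ i ih => rw [pow_succ]; exact mul_mem_orderAtLeast ih hX

theorem mul_mul_sub_mem_orderAtLeast [Fintype κ] [Fintype μ] {t : ℕ}
    {X X' : Matrix ι κ (MvPowerSeries σ R)} {Y Y' : Matrix μ ν (MvPowerSeries σ R)}
    (hX : X - X' ∈ orderAtLeast t) (hY : Y - Y' ∈ orderAtLeast t)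
    (A : Matrix κ μ (MvPowerSeries σ R)) : X * A * Y - X' * A * Y' ∈ orderAtLeast t := by
  have h : X * A * Y - X' * A * Y' = (X - X') * A * Y + X' * A * (Y - Y') := by
    simp only [Matrix.sub_mul, Matrix.mul_sub]; abel
  rw [h]
  refine add_mem ?_ ?_
  · simpa using mul_mem_orderAtLeast (mul_mem_orderAtLeast hX (mem_orderAtLeast_zero A))
      (mem_orderAtLeast_zero Y)
  · simpa using mul_mem_orderAtLeast (mem_orderAtLeast_zero (X' * A)) hY

end Matrix

open Matrix

theorem coeff_truncLE {K : Type*} [CommRing K] {p j : ℕ} (d : Fin p →₀ ℕ)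
    (f : MvPowerSeries (Fin p) K) :
    coeff d (truncLE K p j f) = if d.degree ≤ j then coeff d f else 0 :=
  rfl

theorem truncLE_eq_zero_iff {K : Type*} [CommRing K] {p j : ℕ} {f : MvPowerSeries (Fin p) K} :
    truncLE K p j f = 0 ↔ ((j + 1 : ℕ) : ℕ∞) ≤ f.order := by
  simp only [MvPowerSeries.ext_iff, coeff_truncLE, map_zero, ite_eq_right_iff]
  constructor
  · exact fun h => nat_le_order fun d hd => h d (Nat.lt_succ_iff.mp hd)
  · exact fun h d hd =>
      coeff_of_lt_order (lt_of_lt_of_le (by exact_mod_cast Nat.lt_succ_of_le hd) h)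

theorem truncLE_sub {K : Type*} [CommRing K] {p j : ℕ} (f g : MvPowerSeries (Fin p) K) :
    truncLE K p j (f - g) = truncLE K p j f - truncLE K p j g := by
  ext d
  simp only [coeff_truncLE, map_sub]
  split_ifs <;> simp

section Jet

variable {K : Type*} [CommRing K] {m n p j : ℕ}

theorem jet_sub (X Y : Matrix (Fin m) (Fin n) (MvPowerSeries (Fin p) K)) :
    jet j (X - Y) = jet j X - jet j Y := by
  ext a b : 1
  simp only [jet, map_apply, Matrix.sub_apply, truncLE_sub]

theorem jet_eq_zero_iff {X : Matrix (Fin m) (Fin n) (MvPowerSeries (Fin p) K)} :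
    jet j X = 0 ↔ X ∈ orderAtLeast (j + 1) := by
  rw [← Matrix.ext_iff]
  simp only [jet, map_apply, Matrix.zero_apply, truncLE_eq_zero_iff]
  rfl

theorem jet_eq_jet_iff {X Y : Matrix (Fin m) (Fin n) (MvPowerSeries (Fin p) K)} :
    jet j X = jet j Y ↔ X - Y ∈ orderAtLeast (j + 1) := by
  rw [← sub_eq_zero, ← jet_sub, jet_eq_zero_iff]

end Jet

section TwoSidedMul

variable {K : Type*} [Field K] {m n p : ℕ}

/-- At `νr = -ν_r` this is the linearization `S'_A(0)` of the two-sided action. -/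
noncomputable def twoSidedMul (νl : Matrix (Fin m) (Fin m) (MvPowerSeries (Fin p) K))
    (νr : Matrix (Fin n) (Fin n) (MvPowerSeries (Fin p) K)) :
    Module.End K (Matrix (Fin m) (Fin n) (MvPowerSeries (Fin p) K)) :=
  mulLeftLinearMap (Fin n) K νl + mulRightLinearMap (Fin m) K νr

variable {νl : Matrix (Fin m) (Fin m) (MvPowerSeries (Fin p) K)}
  {νr : Matrix (Fin n) (Fin n) (MvPowerSeries (Fin p) K)}

theorem twoSidedMul_apply (X : Matrix (Fin m) (Fin n) (MvPowerSeries (Fin p) K)) :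
    twoSidedMul νl νr X = νl * X + X * νr :=
  rfl

theorem twoSidedMul_mem_orderAtLeast_succ (hl : νl ∈ orderAtLeast 1) (hr : νr ∈ orderAtLeast 1)
    (t : ℕ) : ∀ X ∈ orderAtLeast t, twoSidedMul νl νr X ∈ orderAtLeast (t + 1) := fun X hX =>
  add_mem (by simpa [add_comm] using mul_mem_orderAtLeast hl hX) (mul_mem_orderAtLeast hX hr)

/-- The product of the truncated exponentials is the truncated exponential of the commuting sum
`L + R` of left and right multiplication, up to the terms `νl^i A νr^i'` with `i + i' > k`. -/
theorem expPartial_mul_mul_expPartial_sub_mem [CharZero K] (hl : νl ∈ orderAtLeast 1)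
    (hr : νr ∈ orderAtLeast 1) (A : Matrix (Fin m) (Fin n) (MvPowerSeries (Fin p) K)) (k : ℕ) :
    expPartial νl k * A * expPartial νr k -
      ∑ s ∈ range (k + 1), (s ! : K)⁻¹ • (twoSidedMul νl νr ^ s) A ∈ orderAtLeast (k + 1) := by
  set L := mulLeftLinearMap (Fin n) K νl
  set R := mulRightLinearMap (Fin m) K νr
  set c : ℕ × ℕ → K := fun q => (q.1 ! : K)⁻¹ * (q.2 ! : K)⁻¹
  have hterm : ∀ i i' : ℕ, (L ^ i * R ^ i') A = νl ^ i * A * νr ^ i' := fun i i' => by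
    simp [L, R, pow_mulLeftLinearMap, pow_mulRightLinearMap, Matrix.mul_assoc]
  have hprod : expPartial νl k * A * expPartial νr k =
      ∑ q ∈ range (k + 1) ×ˢ range (k + 1), c q • (L ^ q.1 * R ^ q.2) A := by
    simp only [expPartial, Matrix.sum_mul]
    rw [sum_product]
    refine sum_congr rfl fun i _ => ?_
    rw [Matrix.mul_sum]
    refine sum_congr rfl fun i' _ => ?_
    rw [hterm, Matrix.smul_mul, Matrix.smul_mul, Matrix.mul_smul, smul_smul]
  have hexp : ∑ s ∈ range (k + 1), (s ! : K)⁻¹ • (twoSidedMul νl νr ^ s) A =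
      ∑ s ∈ range (k + 1), ∑ q ∈ antidiagonal s, c q • (L ^ q.1 * R ^ q.2) A := by
    have hLR : Commute L R := commute_mulLeftLinearMap_mulRightLinearMap νl νr
    refine sum_congr rfl fun s _ => ?_
    rw [← LinearMap.smul_apply, show twoSidedMul νl νr = L + R from rfl,
      hLR.inv_factorial_smul_add_pow, LinearMap.sum_apply]
    rfl
  rw [hprod, hexp, sum_range_prod_range_eq, add_sub_cancel_left]
  refine sum_mem fun q hq => Submodule.smul_mem _ _ ?_
  rw [mem_filter] at hq
  rw [hterm]
  refine orderAtLeast_antitone (show k + 1 ≤ q.1 + q.2 by omega) ?_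
  simpa using mul_mem_orderAtLeast (mul_mem_orderAtLeast (pow_mem_orderAtLeast hl q.1)
    (mem_orderAtLeast_zero A)) (pow_mem_orderAtLeast hr q.2)

end TwoSidedMul

/-- `exp(ν_l) A exp(-ν_r)` agrees with `A` up to degree `j` iff
`π_j(ν_l A - A ν_r) = 0`. -/
theorem jet_stabilizer_iff {K : Type*} [Field K] [CharZero K] {m n p : ℕ}
    (νl : Matrix (Fin m) (Fin m) (MvPowerSeries (Fin p) K))
    (νr : Matrix (Fin n) (Fin n) (MvPowerSeries (Fin p) K))
    (hl : ∀ a b, MvPowerSeries.constantCoeff (νl a b) = 0)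
    (hr : ∀ a b, MvPowerSeries.constantCoeff (νr a b) = 0)
    (El : Matrix (Fin m) (Fin m) (MvPowerSeries (Fin p) K))
    (Er : Matrix (Fin n) (Fin n) (MvPowerSeries (Fin p) K))
    (hEl : IsExpOf νl El) (hEr : IsExpOf (-νr) Er)
    (A : Matrix (Fin m) (Fin n) (MvPowerSeries (Fin p) K)) (j : ℕ) :
    jet j (El * A * Er) = jet j A ↔ jet j (νl * A - A * νr) = 0 := by
  obtain ⟨k₁, hk₁⟩ := hEl j
  obtain ⟨k₂, hk₂⟩ := hEr j
  set N := k₁ + k₂ + j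
  set D := twoSidedMul νl (-νr)
  have hνl : νl ∈ orderAtLeast 1 := mem_orderAtLeast_one_iff.2 hl
  have hνr : -νr ∈ orderAtLeast 1 := neg_mem (mem_orderAtLeast_one_iff.2 hr)
  have happrox : El * A * Er - ∑ s ∈ range (N + 1 + 1), (s ! : K)⁻¹ • (D ^ s) A
      ∈ orderAtLeast (j + 1) := by
    rw [← sub_add_sub_cancel _ (expPartial νl (N + 1) * A * expPartial (-νr) (N + 1))]
    refine add_mem (mul_mul_sub_mem_orderAtLeast ?_ ?_ A) ?_
    · exact jet_eq_jet_iff.1 (hk₁ _ (by omega)).symm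
    · exact jet_eq_jet_iff.1 (hk₂ _ (by omega)).symm
    · exact orderAtLeast_antitone (by omega) (expPartial_mul_mul_expPartial_sub_mem hνl hνr A _)
  have hlin : D A = νl * A - A * νr := by
    rw [twoSidedMul_apply, Matrix.mul_neg, sub_eq_add_neg]
  rw [← sub_sub_sub_cancel_right _ _ A] at happrox
  rw [jet_eq_jet_iff, jet_eq_zero_iff, ← hlin]
  calc El * A * Er - A ∈ orderAtLeast (j + 1)
      ↔ ∑ s ∈ range (N + 1 + 1), (s ! : K)⁻¹ • (D ^ s) A - A ∈ orderAtLeast (j + 1) :=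
      ⟨fun h => by simpa only [sub_sub_cancel] using sub_mem h happrox,
        fun h => by simpa only [sub_add_cancel] using add_mem happrox h⟩
    _ ↔ ∑ s ∈ range (N + 1), ((s + 1)! : K)⁻¹ • (D ^ s) (D A) ∈ orderAtLeast (j + 1) := by
      rw [sum_inv_factorial_smul_pow_apply_sub]
    _ ↔ D A ∈ orderAtLeast (j + 1) :=
      sum_smul_pow_apply_mem_iff orderAtLeast_antitone mem_orderAtLeast_zero
        (twoSidedMul_mem_orderAtLeast_succ hνl hνr) (by simp) N _ _
end

section
/- Let A_0 be a constant m×n matrix over a field K. The equation λ_l A_0 − A_0 λ_r = P is solvable in square matrices λ_l (m×m) and λ_r (n×n) for every m×n matrix P if and only if rank(A_0) = min(m,n). -/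
open Matrix

private lemma surj_of_rank_eq {K : Type*} [Field K] {a b : ℕ}
    (B : Matrix (Fin a) (Fin b) K) (h : B.rank = a) :
    Function.Surjective B.mulVecLin := by
  rw [← LinearMap.range_eq_top]
  apply Submodule.eq_top_of_finrank_eq
  have : Module.finrank K (LinearMap.range B.mulVecLin) = B.rank := rfl
  rw [this, h, Module.finrank_fintype_fun_eq_card, Fintype.card_fin]

private lemma exists_ker_of_rank_lt {K : Type*} [Field K] {a b : ℕ}
    (B : Matrix (Fin a) (Fin b) K) (h : B.rank < b) :
    ∃ v : Fin b → K, v ≠ 0 ∧ B.mulVecLin v = 0 := by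
  by_contra hc
  push_neg at hc
  have hinj : Function.Injective B.mulVecLin := by
    rw [← LinearMap.ker_eq_bot]
    rw [Submodule.eq_bot_iff]
    intro v hv
    by_contra hv0
    exact (hc v hv0) hv
  have : Module.finrank K (LinearMap.range B.mulVecLin)
      = Module.finrank K (Fin b → K) := LinearMap.finrank_range_of_inj hinj
  have hb : B.rank = b := by
    rw [Matrix.rank, this, Module.finrank_fintype_fun_eq_card, Fintype.card_fin]
  omega

/-- For a constant matrix `A₀`, the equation `λ_l A₀ - A₀ λ_r = P` is solvable
for every `P` iff `rank A₀ = min m n`. -/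
theorem zero_determinacy_constant_matrix {K : Type*} [Field K] {m n : ℕ}
    (A₀ : Matrix (Fin m) (Fin n) K) :
    (∀ P : Matrix (Fin m) (Fin n) K,
        ∃ (l : Matrix (Fin m) (Fin m) K) (r : Matrix (Fin n) (Fin n) K),
          l * A₀ - A₀ * r = P) ↔ A₀.rank = min m n := by
  constructor
  · intro hP
    by_contra hrk
    have h1 : A₀.rank ≤ m := A₀.rank_le_height
    have h2 : A₀.rank ≤ n := A₀.rank_le_width
    have hlt : A₀.rank < min m n := lt_of_le_of_ne (le_min h1 h2) hrk
    have hltm : A₀.rank < m := lt_of_lt_of_le hlt (min_le_left _ _)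
    have hltn : A₀.rank < n := lt_of_lt_of_le hlt (min_le_right _ _)
    obtain ⟨v, hv0, hv⟩ := exists_ker_of_rank_lt A₀ hltn
    have hT : A₀ᵀ.rank < m := by rw [A₀.rank_transpose]; exact hltm
    obtain ⟨u, hu0, hu⟩ := exists_ker_of_rank_lt A₀ᵀ hT
    have hAv : A₀ *ᵥ v = 0 := hv
    have huA : u ᵥ* A₀ = 0 := by
      have : A₀ᵀ *ᵥ u = 0 := hu
      rwa [← Matrix.vecMul_transpose, Matrix.transpose_transpose] at this
    obtain ⟨i, hi⟩ := Function.ne_iff.mp hu0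
    obtain ⟨j, hj⟩ := Function.ne_iff.mp hv0
    set P : Matrix (Fin m) (Fin n) K :=
      Matrix.of (fun a b => (if a = i then (1:K) else 0) * (if b = j then (1:K) else 0)) with hPdef
    obtain ⟨l, r, hlr⟩ := hP P
    have key : u ⬝ᵥ (P *ᵥ v) = 0 := by
      rw [← hlr]
      rw [Matrix.sub_mulVec, dotProduct_sub]
      rw [← Matrix.mulVec_mulVec, hAv, Matrix.mulVec_zero]
      rw [Matrix.dotProduct_mulVec, ← Matrix.vecMul_vecMul, huA, Matrix.zero_vecMul]
      simp [dotProduct_zero]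
    have : u ⬝ᵥ (P *ᵥ v) = u i * v j := by
      simp only [hPdef, dotProduct, Matrix.mulVec, Matrix.of_apply]
      simp [Finset.mul_sum, mul_comm, mul_left_comm, mul_assoc]
    rw [this] at key
    exact (mul_ne_zero (by simpa using hi) (by simpa using hj)) key
  · intro hrk P
    rcases le_total m n with hmn | hnm
    · -- rank = m : mulVecLin surjective, solve A₀ * r = -P with l = 0
      have hm : A₀.rank = m := by rw [hrk, min_eq_left hmn]
      have hs := surj_of_rank_eq A₀ hm
      choose f hf using fun j => hs (fun i => -P i j)
      refine ⟨0, Matrix.of (fun k j => f j k), ?_⟩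
      ext i j
      have := congrFun (hf j) i
      simp only [Matrix.mulVecLin_apply, Matrix.mulVec, dotProduct] at this
      simp [Matrix.mul_apply, Matrix.sub_apply, this]
    · -- rank = n : A₀ᵀ surjective, solve l * A₀ = P with r = 0
      have hn : A₀ᵀ.rank = n := by rw [A₀.rank_transpose, hrk, min_eq_right hnm]
      have hs := surj_of_rank_eq A₀ᵀ hn
      choose f hf using fun i => hs (fun j => P i j)
      refine ⟨Matrix.of (fun i k => f i k), 0, ?_⟩
      ext i j
      have := congrFun (hf i) j
      simp only [Matrix.mulVecLin_apply, Matrix.mulVec, dotProduct,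
        Matrix.transpose_apply] at this
      simp only [Matrix.mul_apply, Matrix.sub_apply, Matrix.mul_zero,
        Matrix.zero_apply, sub_zero, Matrix.of_apply]
      rw [← this]
      exact Finset.sum_congr rfl fun k _ => mul_comm _ _
end
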